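/- Mrs. Gerber's Lemma (convexity form): for any fixed p ∈ [0,1], the function mapping h(δ) to h(p∗δ) is convex; that is, the parametric curve (h(δ), h(p∗δ)) for δ ∈ [0,1/2] is the graph of a convex function. -/

import Mathlib

/-!
Write `x = h⁻¹(t)` and `y = p ∗ x = p + (1 - 2p) x`. By Cauchy's mean value theorem,
`t ↦ h(p ∗ h⁻¹(t))` is convex as soon as the ratio of derivatives `(1 - 2p) L(y) / L(x)` increases
with `x`, where `L(z) = log ((1 - z) / z)` is `h'` up to the factor `log 2`. Differentiating, this
reduces to `(1 - 2p) x (1 - x) L(x) ≤ y (1 - y) L(y)`; since `1 - 2y = (1 - 2p)(1 - 2x)` and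
`x ≤ y`, it follows from the monotonicity of `z (1 - z) L(z) / (1 - 2z)` on `(0, 1/2)`, which in
turn comes from `L(z) ≥ 2 (1 - 2z)`, the first term of the series of `log ((1 + u) / (1 - u))` at
`u = 1 - 2z`. The case `p > 1/2` reduces to `1 - p` by the symmetry `h(1 - z) = h(z)`.
-/

/-- Binary convolution: `a ∗ b = a(1-b) + (1-a)b`. -/
noncomputable def bconv (a b : ℝ) : ℝ := a * (1 - b) + (1 - a) * b

/-- Base-2 binary entropy function (with `h(0) = h(1) = 0`, since `logb 2 0 = 0`). -/
noncomputable def hbin (x : ℝ) : ℝ := -(x * Real.logb 2 x) - (1 - x) * Real.logb 2 (1 - x)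

open Real Set

theorem convexOn_comp_of_monotoneOn_deriv_div_deriv {f f' k k' g : ℝ → ℝ} {a b : ℝ} {s : Set ℝ}
    (hs : Convex ℝ s) (hfc : ContinuousOn f (Icc a b)) (hkc : ContinuousOn k (Icc a b))
    (hf : ∀ x ∈ Ioo a b, HasDerivAt f (f' x) x) (hk : ∀ x ∈ Ioo a b, HasDerivAt k (k' x) x)
    (hf'_pos : ∀ x ∈ Ioo a b, 0 < f' x) (hratio : MonotoneOn (fun x => k' x / f' x) (Ioo a b))
    (hg : MapsTo g s (Icc a b)) (hfg : RightInvOn g f s) :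
    ConvexOn ℝ s (fun t => k (g t)) := by
  have hf_mono : StrictMonoOn f (Icc a b) :=
    strictMonoOn_of_hasDerivWithinAt_pos (convex_Icc a b) hfc
      (fun x hx => (hf x (by rwa [interior_Icc] at hx)).hasDerivWithinAt)
      (fun x hx => hf'_pos x (by rwa [interior_Icc] at hx))
  have hg_mono : StrictMonoOn g s := fun t₁ h₁ t₂ h₂ h₁₂ => by
    by_contra! h
    have := hf_mono.monotoneOn (hg h₂) (hg h₁) h
    rw [hfg h₁, hfg h₂] at this
    exact h₁₂.not_ge this
  have slope_eq {x₁ x₂ : ℝ} (h₁ : x₁ ∈ Icc a b) (h₂ : x₂ ∈ Icc a b) (h₁₂ : x₁ < x₂) :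
      ∃ ξ ∈ Ioo x₁ x₂, (k x₂ - k x₁) / (f x₂ - f x₁) = k' ξ / f' ξ := by
    have hsub : Icc x₁ x₂ ⊆ Icc a b := Icc_subset_Icc h₁.1 h₂.2
    have hsub' : Ioo x₁ x₂ ⊆ Ioo a b := Ioo_subset_Ioo h₁.1 h₂.2
    obtain ⟨ξ, hξ, h⟩ := exists_ratio_hasDerivAt_eq_ratio_slope f f' h₁₂ (hfc.mono hsub)
      (fun x hx => hf x (hsub' hx)) k k' (hkc.mono hsub) (fun x hx => hk x (hsub' hx))
    refine ⟨ξ, hξ, (div_eq_div_iff ?_ (hf'_pos ξ (hsub' hξ)).ne').2 (h.trans (mul_comm _ _))⟩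
    exact (sub_pos.2 (hf_mono h₁ h₂ h₁₂)).ne'
  refine convexOn_of_slope_mono_adjacent hs fun {t₁ t₂ t₃} h₁ h₃ h₁₂ h₂₃ => ?_
  have h₂ : t₂ ∈ s := hs.ordConnected.out h₁ h₃ ⟨h₁₂.le, h₂₃.le⟩
  obtain ⟨ξ, hξ, hξeq⟩ := slope_eq (hg h₁) (hg h₂) (hg_mono h₁ h₂ h₁₂)
  obtain ⟨η, hη, hηeq⟩ := slope_eq (hg h₂) (hg h₃) (hg_mono h₂ h₃ h₂₃)
  rw [hfg h₁, hfg h₂] at hξeq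
  rw [hfg h₂, hfg h₃] at hηeq
  rw [hξeq, hηeq]
  exact hratio ⟨(hg h₁).1.trans_lt hξ.1, hξ.2.trans_le (hg h₂).2⟩
    ⟨(hg h₂).1.trans_lt hη.1, hη.2.trans_le (hg h₃).2⟩ (hξ.2.trans hη.1).le

noncomputable def binEntropyDeriv (z : ℝ) : ℝ := log (1 - z) - log z

lemma hasDerivAt_binEntropyDeriv {z : ℝ} (h₀ : z ≠ 0) (h₁ : z ≠ 1) :
    HasDerivAt binEntropyDeriv (-(z * (1 - z))⁻¹) z := by
  have h₁' : 1 - z ≠ 0 := sub_ne_zero.2 h₁.symm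
  have := ((hasDerivAt_id' z).const_sub 1).log h₁' |>.sub (hasDerivAt_log h₀)
  refine this.congr_deriv ?_
  field_simp
  ring

lemma binEntropyDeriv_pos {z : ℝ} (h₀ : 0 < z) (h₁ : z < 1 / 2) : 0 < binEntropyDeriv z :=
  sub_pos.2 (log_lt_log h₀ (by linarith))

lemma two_mul_le_log_one_add_sub_log_one_sub {u : ℝ} (h₀ : 0 ≤ u) (h₁ : u < 1) :
    2 * u ≤ log (1 + u) - log (1 - u) := by
  have hs := hasSum_log_sub_log_of_abs_lt_one (abs_lt.2 ⟨by linarith, h₁⟩)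
  simpa using le_hasSum hs 0 fun k _ => by positivity

lemma two_mul_one_sub_two_mul_le_binEntropyDeriv {z : ℝ} (h₀ : 0 < z) (h₁ : z ≤ 1 / 2) :
    2 * (1 - 2 * z) ≤ binEntropyDeriv z := by
  have h := two_mul_le_log_one_add_sub_log_one_sub (u := 1 - 2 * z) (by linarith) (by linarith)
  rwa [show 1 + (1 - 2 * z) = 2 * (1 - z) by ring, show 1 - (1 - 2 * z) = 2 * z by ring,
    log_mul two_ne_zero (by linarith), log_mul two_ne_zero h₀.ne', add_sub_add_left_eq_sub] at h

lemma monotoneOn_binEntropyDeriv_mul_div :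
    MonotoneOn (fun z => z * (1 - z) * binEntropyDeriv z / (1 - 2 * z)) (Ioo 0 (1 / 2)) := by
  have hderiv {z : ℝ} (hz : z ∈ Ioo (0 : ℝ) (1 / 2)) : HasDerivAt
      (fun z => z * (1 - z) * binEntropyDeriv z / (1 - 2 * z))
      ((binEntropyDeriv z * (1 - 2 * z + 2 * z ^ 2) - (1 - 2 * z)) / (1 - 2 * z) ^ 2) z := by
    have h₀ : z ≠ 0 := hz.1.ne'
    have h₁ : 1 - z ≠ 0 := by linarith [hz.2]
    have h₂ : 1 - 2 * z ≠ 0 := by linarith [hz.2]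
    have := (((hasDerivAt_id' z).mul ((hasDerivAt_id' z).const_sub 1)).mul
      (hasDerivAt_binEntropyDeriv h₀ (by linarith [hz.2]))).div
      (((hasDerivAt_id' z).const_mul 2).const_sub 1) h₂
    refine this.congr_deriv ?_
    simp only [Pi.mul_apply]
    field_simp
    ring
  refine monotoneOn_of_hasDerivWithinAt_nonneg (convex_Ioo _ _)
    (fun z hz => (hderiv hz).continuousAt.continuousWithinAt)
    (fun z hz => (hderiv (interior_subset hz)).hasDerivWithinAt) fun z hz => ?_
  rw [interior_Ioo] at hz
  have hL := two_mul_one_sub_two_mul_le_binEntropyDeriv hz.1 hz.2.le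
  have hz' : 0 ≤ 1 - 2 * z := by linarith [hz.2]
  exact div_nonneg (by nlinarith [sq_nonneg (1 - 2 * z)]) (sq_nonneg _)

lemma bconv_eq_add_mul (p x : ℝ) : bconv p x = p + (1 - 2 * p) * x := by
  unfold bconv; ring

lemma one_sub_two_mul_bconv (p x : ℝ) : 1 - 2 * bconv p x = (1 - 2 * p) * (1 - 2 * x) := by
  unfold bconv; ring

lemma bconv_one_sub_left (p x : ℝ) : bconv (1 - p) x = 1 - bconv p x := by
  unfold bconv; ring

lemma hasDerivAt_bconv (p x : ℝ) : HasDerivAt (bconv p) (1 - 2 * p) x := by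
  simpa [funext (bconv_eq_add_mul p)] using ((hasDerivAt_id' x).const_mul (1 - 2 * p)).const_add p

lemma bconv_mem_Icc {p x : ℝ} (hp₀ : 0 ≤ p) (hp₁ : p ≤ 1 / 2) (hx : x ≤ 1 / 2) :
    bconv p x ∈ Icc x (1 / 2) := by
  have h₁ : bconv p x - x = p * (1 - 2 * x) := by unfold bconv; ring
  have h₂ := one_sub_two_mul_bconv p x
  constructor <;> nlinarith

lemma mul_binEntropyDeriv_le_bconv {p x : ℝ} (hp₀ : 0 ≤ p) (hp₁ : p < 1 / 2)
    (hx : x ∈ Ioo (0 : ℝ) (1 / 2)) :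
    (1 - 2 * p) * (x * (1 - x) * binEntropyDeriv x) ≤
      bconv p x * (1 - bconv p x) * binEntropyDeriv (bconv p x) := by
  have hy := bconv_mem_Icc hp₀ hp₁.le hx.2.le
  have hc : 0 < 1 - 2 * p := by linarith
  have hx' : 0 < 1 - 2 * x := by linarith [hx.2]
  have hy' : 0 < 1 - 2 * bconv p x := one_sub_two_mul_bconv p x ▸ mul_pos hc hx'
  have h := monotoneOn_binEntropyDeriv_mul_div hx ⟨hx.1.trans_le hy.1, by linarith⟩ hy.1
  rw [div_le_div_iff₀ hx' hy', one_sub_two_mul_bconv] at h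
  nlinarith

lemma monotoneOn_mul_binEntropyDeriv_bconv_div {p : ℝ} (hp₀ : 0 ≤ p) (hp₁ : p ≤ 1 / 2) :
    MonotoneOn (fun x => (1 - 2 * p) * binEntropyDeriv (bconv p x) / binEntropyDeriv x)
      (Ioo 0 (1 / 2)) := by
  rcases hp₁.eq_or_lt with rfl | hp₁
  · simpa using monotoneOn_const
  have hderiv {x : ℝ} (hx : x ∈ Ioo (0 : ℝ) (1 / 2)) : HasDerivAt
      (fun x => (1 - 2 * p) * binEntropyDeriv (bconv p x) / binEntropyDeriv x)
      ((1 - 2 * p) * (binEntropyDeriv (bconv p x) / (x * (1 - x)) -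
        (1 - 2 * p) * binEntropyDeriv x / (bconv p x * (1 - bconv p x))) /
        binEntropyDeriv x ^ 2) x := by
    have hy := bconv_mem_Icc hp₀ hp₁.le hx.2.le
    have hy₀ : bconv p x ≠ 0 := (hx.1.trans_le hy.1).ne'
    have := (((hasDerivAt_binEntropyDeriv hy₀ (by linarith [hy.2])).comp x
      (hasDerivAt_bconv p x)).const_mul (1 - 2 * p)).div
      (hasDerivAt_binEntropyDeriv hx.1.ne' (by linarith [hx.2])) (binEntropyDeriv_pos hx.1 hx.2).ne'
    refine this.congr_deriv ?_
    simp only [Function.comp_apply]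
    field_simp
    ring
  refine monotoneOn_of_hasDerivWithinAt_nonneg (convex_Ioo _ _)
    (fun x hx => (hderiv hx).continuousAt.continuousWithinAt)
    (fun x hx => (hderiv (interior_subset hx)).hasDerivWithinAt) fun x hx => ?_
  rw [interior_Ioo] at hx
  have hy := bconv_mem_Icc hp₀ hp₁.le hx.2.le
  have hxx : 0 < x * (1 - x) := mul_pos hx.1 (by linarith [hx.2])
  have hyy : 0 < bconv p x * (1 - bconv p x) := mul_pos (hx.1.trans_le hy.1) (by linarith [hy.2])
  have key := mul_binEntropyDeriv_le_bconv hp₀ hp₁ hx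
  have : (1 - 2 * p) * binEntropyDeriv x / (bconv p x * (1 - bconv p x)) ≤
      binEntropyDeriv (bconv p x) / (x * (1 - x)) := by
    rw [div_le_div_iff₀ hyy hxx]; linarith
  exact div_nonneg (mul_nonneg (by linarith) (by linarith)) (sq_nonneg _)

lemma hbin_eq_binEntropy_div (x : ℝ) : hbin x = binEntropy x / log 2 := by
  simp only [hbin, binEntropy, logb, log_inv]
  ring

lemma hbin_one_sub (x : ℝ) : hbin (1 - x) = hbin x := by
  simp only [hbin_eq_binEntropy_div, binEntropy_one_sub]

lemma continuous_hbin : Continuous hbin := by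
  simpa only [funext hbin_eq_binEntropy_div] using binEntropy_continuous.div_const (log 2)

lemma hasDerivAt_hbin {x : ℝ} (h₀ : x ≠ 0) (h₁ : x ≠ 1) :
    HasDerivAt hbin (binEntropyDeriv x / log 2) x := by
  simpa only [funext hbin_eq_binEntropy_div, binEntropyDeriv] using
    (hasDerivAt_binEntropy h₀ h₁).div_const (log 2)

lemma convexOn_hbin_bconv_comp {p : ℝ} (hp₀ : 0 ≤ p) (hp₁ : p ≤ 1 / 2) {s : Set ℝ} {g : ℝ → ℝ}
    (hs : Convex ℝ s) (hg : MapsTo g s (Icc 0 (1 / 2))) (hgh : RightInvOn g hbin s) :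
    ConvexOn ℝ s (fun t => hbin (bconv p (g t))) := by
  have hy {x : ℝ} (hx : x ∈ Ioo (0 : ℝ) (1 / 2)) := bconv_mem_Icc hp₀ hp₁ hx.2.le
  refine convexOn_comp_of_monotoneOn_deriv_div_deriv (k := fun x => hbin (bconv p x)) hs
    continuous_hbin.continuousOn (continuous_hbin.comp_continuousOn (by unfold bconv; fun_prop))
    (fun x hx => hasDerivAt_hbin hx.1.ne' (by linarith [hx.2]))
    (fun x hx => (hasDerivAt_hbin (hx.1.trans_le (hy hx).1).ne' (by linarith [(hy hx).2])).comp x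
      (hasDerivAt_bconv p x))
    (fun x hx => div_pos (binEntropyDeriv_pos hx.1 hx.2) (log_pos one_lt_two)) ?_ hg hgh
  refine (monotoneOn_mul_binEntropyDeriv_bconv_div hp₀ hp₁).congr fun x hx => ?_
  field_simp

/-- Mrs. Gerber's Lemma (convexity form): for any `p ∈ [0,1]`, the map
`t ↦ h(p ∗ h⁻¹(t))` is convex on `[0,1]`, where `h⁻¹ : [0,1] → [0,1/2]` is the
inverse of the binary entropy restricted to `[0,1/2]`. -/
theorem mrs_gerber_convexity (p : ℝ) (hp : p ∈ Set.Icc (0:ℝ) 1)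
    (hinv : ℝ → ℝ)
    (hinv_mem : ∀ t ∈ Set.Icc (0:ℝ) 1, hinv t ∈ Set.Icc (0:ℝ) (1/2))
    (hinv_eq : ∀ t ∈ Set.Icc (0:ℝ) 1, hbin (hinv t) = t) :
    ConvexOn ℝ (Set.Icc (0:ℝ) 1) (fun t => hbin (bconv p (hinv t))) := by
  rcases le_or_gt p (1 / 2) with hp₁ | hp₁
  · exact convexOn_hbin_bconv_comp hp.1 hp₁ (convex_Icc 0 1) hinv_mem hinv_eq
  · have h := convexOn_hbin_bconv_comp (p := 1 - p) (by linarith [hp.2]) (by linarith)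
      (convex_Icc 0 1) hinv_mem hinv_eq
    simpa only [bconv_one_sub_left, hbin_one_sub] using h
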